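/- arXiv:2507.00160 — 3 statements merged into one kernel-verified Lean document; each statement's English description precedes it below -/
import Mathlib

section
/- Let (Ω, μ) be a measure space, p a real number with p ≥ 2, and u, v ∈ L^p(μ) real-valued. Then the function (|u|^{p-2}u − |v|^{p-2}v)(u − v) is integrable and ∫_Ω (|u|^{p-2}u − |v|^{p-2}v)(u − v) dμ ≥ (1/2)∫_Ω |u|^{p-2}(u − v)^2 dμ + (1/2)∫_Ω |v|^{p-2}(u − v)^2 dμ. -/
open MeasureTheory Real

/-!
Writing `A = |a|^(p-2)` and `B = |b|^(p-2)`, one has the identity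
`(A a - B b)(a - b) = ½ A (a-b)² + ½ B (a-b)² + ½ (A - B)(a² - b²)`,
and the last term is nonnegative because `A` and `a²` are both increasing in `|a|` when `p ≥ 2`.
Integrating gives the inequality; integrability holds because every term `|a|^(p-2) c²` is
dominated by `|a|^p + |c|^p`.
-/

theorem abs_rpow_sub_two_mul_sq {p : ℝ} (hp : p ≠ 0) (a : ℝ) :
    |a| ^ (p - 2) * a ^ 2 = |a| ^ p := by
  rw [← sq_abs, ← rpow_natCast, ← rpow_add' (abs_nonneg a) (by simpa using hp)]
  norm_num

theorem abs_rpow_sub_two_mul_sq_le {p : ℝ} (hp : 2 ≤ p) (a c : ℝ) :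
    |a| ^ (p - 2) * c ^ 2 ≤ |a| ^ p + |c| ^ p := by
  have hp₀ : p ≠ 0 := by positivity
  rcases le_total |a| |c| with h | h
  · calc |a| ^ (p - 2) * c ^ 2 ≤ |c| ^ (p - 2) * c ^ 2 := by gcongr
      _ = |c| ^ p := abs_rpow_sub_two_mul_sq hp₀ c
      _ ≤ |a| ^ p + |c| ^ p := le_add_of_nonneg_left (by positivity)
  · calc |a| ^ (p - 2) * c ^ 2 ≤ |a| ^ (p - 2) * a ^ 2 :=
          mul_le_mul_of_nonneg_left (sq_le_sq.2 h) (by positivity)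
      _ = |a| ^ p := abs_rpow_sub_two_mul_sq hp₀ a
      _ ≤ |a| ^ p + |c| ^ p := le_add_of_nonneg_right (by positivity)

theorem abs_rpow_sub_mul_sq_sub_nonneg {q : ℝ} (hq : 0 ≤ q) (a b : ℝ) :
    0 ≤ (|a| ^ q - |b| ^ q) * (a ^ 2 - b ^ 2) := by
  rcases le_total |a| |b| with h | h
  · exact mul_nonneg_of_nonpos_of_nonpos
      (sub_nonpos.2 (rpow_le_rpow (abs_nonneg a) h hq)) (sub_nonpos.2 (sq_le_sq.2 h))
  · exact mul_nonneg
      (sub_nonneg.2 (rpow_le_rpow (abs_nonneg b) h hq)) (sub_nonneg.2 (sq_le_sq.2 h))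

theorem mul_sub_mul_mul_sub_eq_half (A B a b : ℝ) :
    (A * a - B * b) * (a - b) =
      1 / 2 * (A * (a - b) ^ 2) + 1 / 2 * (B * (a - b) ^ 2) +
        1 / 2 * ((A - B) * (a ^ 2 - b ^ 2)) := by
  ring

theorem half_abs_rpow_mul_sq_add_le {p : ℝ} (hp : 2 ≤ p) (a b : ℝ) :
    1 / 2 * (|a| ^ (p - 2) * (a - b) ^ 2) + 1 / 2 * (|b| ^ (p - 2) * (a - b) ^ 2) ≤
      (|a| ^ (p - 2) * a - |b| ^ (p - 2) * b) * (a - b) := by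
  rw [mul_sub_mul_mul_sub_eq_half]
  have := abs_rpow_sub_mul_sq_sub_nonneg (by linarith : 0 ≤ p - 2) a b
  linarith

section

variable {Ω : Type*} [MeasurableSpace Ω] {μ : Measure Ω}

theorem integrable_abs_rpow_iff_memLp {p : ℝ} (hp : 0 < p) {f : Ω → ℝ}
    (hf : AEStronglyMeasurable f μ) :
    Integrable (fun x => |f x| ^ p) μ ↔ MemLp f (ENNReal.ofReal p) μ := by
  have h := integrable_norm_rpow_iff hf (ENNReal.ofReal_pos.2 hp).ne' ENNReal.ofReal_ne_top
  simpa only [ENNReal.toReal_ofReal hp.le, Real.norm_eq_abs] using h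

theorem MeasureTheory.MemLp.integrable_abs_rpow_sub_two_mul_sq {p : ℝ} (hp : 2 ≤ p)
    {u w : Ω → ℝ} (hu : MemLp u (ENNReal.ofReal p) μ) (hw : MemLp w (ENNReal.ofReal p) μ) :
    Integrable (fun x => |u x| ^ (p - 2) * w x ^ 2) μ := by
  have hp₀ : 0 < p := by linarith
  have hbound := ((integrable_abs_rpow_iff_memLp hp₀ hu.1).2 hu).add
    ((integrable_abs_rpow_iff_memLp hp₀ hw.1).2 hw)
  refine hbound.mono' ?_ (.of_forall fun x => ?_)
  · have : 0 ≤ p - 2 := by linarith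
    exact ((continuous_rpow_const this).comp_aestronglyMeasurable hu.1.norm).mul (hw.1.pow 2)
  · rw [Real.norm_eq_abs, abs_of_nonneg (by positivity)]
    exact abs_rpow_sub_two_mul_sq_le hp _ _

theorem MeasureTheory.MemLp.integrable_abs_rpow_sub_mul_sq_sub {p : ℝ} (hp : 2 ≤ p)
    {u v : Ω → ℝ} (hu : MemLp u (ENNReal.ofReal p) μ) (hv : MemLp v (ENNReal.ofReal p) μ) :
    Integrable (fun x => (|u x| ^ (p - 2) - |v x| ^ (p - 2)) * (u x ^ 2 - v x ^ 2)) μ :=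
  (((hu.integrable_abs_rpow_sub_two_mul_sq hp hu).sub
    (hu.integrable_abs_rpow_sub_two_mul_sq hp hv)).sub
    ((hv.integrable_abs_rpow_sub_two_mul_sq hp hu).sub
      (hv.integrable_abs_rpow_sub_two_mul_sq hp hv))).congr
    (.of_forall fun x => by simp only [Pi.sub_apply]; ring)

end

/-- On a measure space `(Ω, μ)`, for `p ≥ 2` and `u, v ∈ L^p(μ)`, the
function `(|u|^{p-2}u − |v|^{p-2}v)(u − v)` is integrable and its integral dominates
`(1/2)∫ |u|^{p-2}(u − v)^2 dμ + (1/2)∫ |v|^{p-2}(u − v)^2 dμ`. -/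
theorem integrated_signedPower_monotonicity {Ω : Type*} [MeasurableSpace Ω] (μ : Measure Ω)
    (p : ℝ) (hp : 2 ≤ p) (u v : Ω → ℝ)
    (hum : Measurable u) (hvm : Measurable v)
    (hu : Integrable (fun x => |u x| ^ p) μ)
    (hv : Integrable (fun x => |v x| ^ p) μ) :
    Integrable (fun x => (|u x| ^ (p - 2) * u x - |v x| ^ (p - 2) * v x) * (u x - v x)) μ ∧
      (∫ x, (|u x| ^ (p - 2) * u x - |v x| ^ (p - 2) * v x) * (u x - v x) ∂μ) ≥
        (1 / 2) * (∫ x, |u x| ^ (p - 2) * (u x - v x) ^ 2 ∂μ) +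
          (1 / 2) * (∫ x, |v x| ^ (p - 2) * (u x - v x) ^ 2 ∂μ) := by
  have hp₀ : 0 < p := by linarith
  have hu' := (integrable_abs_rpow_iff_memLp hp₀ hum.aestronglyMeasurable).1 hu
  have hv' := (integrable_abs_rpow_iff_memLp hp₀ hvm.aestronglyMeasurable).1 hv
  have huv := hu'.sub hv'
  have h_u : Integrable (fun x => |u x| ^ (p - 2) * (u x - v x) ^ 2) μ :=
    hu'.integrable_abs_rpow_sub_two_mul_sq hp huv
  have h_v : Integrable (fun x => |v x| ^ (p - 2) * (u x - v x) ^ 2) μ :=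
    hv'.integrable_abs_rpow_sub_two_mul_sq hp huv
  have h_lhs : Integrable
      (fun x => 1 / 2 * (|u x| ^ (p - 2) * (u x - v x) ^ 2) +
        1 / 2 * (|v x| ^ (p - 2) * (u x - v x) ^ 2)) μ :=
    (h_u.const_mul _).add (h_v.const_mul _)
  have h_int := (h_lhs.add
      ((hu'.integrable_abs_rpow_sub_mul_sq_sub hp hv').const_mul (1 / 2))).congr
    (.of_forall fun x => (mul_sub_mul_mul_sub_eq_half _ _ _ _).symm)
  refine ⟨h_int, ?_⟩
  rw [← integral_const_mul, ← integral_const_mul, ← integral_add (h_u.const_mul _)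
    (h_v.const_mul _)]
  exact integral_mono h_lhs h_int fun x => half_abs_rpow_mul_sq_add_le hp _ _
end

section
/- Let (Ω, μ) be a measure space, p a real number with p ≥ 2, and u, v, η ∈ L^p(μ) real-valued. Then the function (|u|^{p-2}u − |v|^{p-2}v)η is integrable and |∫_Ω (|u|^{p-2}u − |v|^{p-2}v) η dμ| ≤ (p − 1) ‖u − v‖_{L^p(μ)} (‖u‖_{L^p(μ)} + ‖v‖_{L^p(μ)})^{p-2} ‖η‖_{L^p(μ)}. -/
/-!
For `φ(s) = |s|^{p-2} s` we have `φ' = (p-1)|s|^{p-2}`, so the mean value theorem gives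
`|φ(a) - φ(b)| ≤ (p-1) (|a|+|b|)^{p-2} |a-b|` pointwise. Integrating against `|η|`, Hölder's
inequality with the three exponents `p, p/(p-2), p` bounds the integral by
`(p-1) ‖u-v‖_p ‖|u|+|v|‖_p^{p-2} ‖η‖_p`, and Minkowski bounds `‖|u|+|v|‖_p` by `‖u‖_p + ‖v‖_p`.
The estimate is carried out for `∫⁻ ‖·‖ₑ` in `ℝ≥0∞`, where it needs no integrability; finiteness
of the right-hand side then gives integrability.
-/

open MeasureTheory

/-- The `L^r(μ)` norm of a real-valued function, `‖f‖_{L^r} = (∫ |f|^r dμ)^{1/r}`. -/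
noncomputable def lpNorm {Ω : Type*} [MeasurableSpace Ω] (μ : Measure Ω) (r : ℝ)
    (f : Ω → ℝ) : ℝ :=
  (∫ x, |f x| ^ r ∂μ) ^ (1 / r)

open Filter Topology
open scoped ENNReal

section SignedPower

variable {q : ℝ}

theorem hasDerivAt_abs_rpow_mul_self (hq : 0 ≤ q) (t : ℝ) :
    HasDerivAt (fun s : ℝ => |s| ^ q * s) ((q + 1) * |t| ^ q) t := by
  rcases eq_or_ne t 0 with rfl | ht
  · rcases hq.eq_or_lt with rfl | hq
    · simpa using hasDerivAt_id' (0 : ℝ)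
    have hlim : Tendsto (fun s : ℝ => |s| ^ q) (𝓝 0) (𝓝 0) := by
      have := ((Real.continuous_rpow_const hq.le).comp continuous_abs).tendsto 0
      simpa [Function.comp_def, Real.zero_rpow hq.ne'] using this
    rw [hasDerivAt_iff_isLittleO]
    simpa [Real.zero_rpow hq.ne'] using (Asymptotics.isLittleO_one_iff ℝ).2 hlim
      |>.mul_isBigO (Asymptotics.isBigO_refl (fun s : ℝ => s) (𝓝 0))
  · have h : HasDerivAt (fun s : ℝ => |s| ^ q * s)
        (q * |t| ^ (q - 1) * SignType.sign t * t + |t| ^ q * 1) t :=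
      ((Real.hasDerivAt_rpow_const (Or.inl (abs_ne_zero.2 ht))).comp t (hasDerivAt_abs ht)).mul
        (hasDerivAt_id' t)
    convert h using 1
    rw [mul_assoc _ _ t, sign_mul_self, mul_assoc,
      ← Real.rpow_add_one (abs_ne_zero.2 ht), sub_add_cancel]
    ring

theorem abs_rpow_mul_self_sub_le (hq : 0 ≤ q) (a b : ℝ) :
    |(|a| ^ q * a - |b| ^ q * b)| ≤ (q + 1) * (|a| + |b|) ^ q * |a - b| := by
  have hbound : ∀ s ∈ Set.uIcc a b, ‖(q + 1) * |s| ^ q‖ ≤ (q + 1) * (|a| + |b|) ^ q := by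
    intro s hs
    have hs' : |s| ≤ |a| + |b| := by
      rcases Set.mem_uIcc.1 hs with ⟨h₁, h₂⟩ | ⟨h₁, h₂⟩ <;> rw [abs_le] <;> constructor <;>
        linarith [le_abs_self a, le_abs_self b, neg_abs_le a, neg_abs_le b]
    rw [Real.norm_of_nonneg (by positivity)]
    gcongr
  simpa only [Real.norm_eq_abs] using
    (convex_uIcc a b).norm_image_sub_le_of_norm_hasDerivWithin_le
      (fun s _ => (hasDerivAt_abs_rpow_mul_self hq s).hasDerivWithinAt) hbound
      Set.right_mem_uIcc Set.left_mem_uIcc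

theorem enorm_abs_rpow_mul_self_sub_mul_le (hq : 0 ≤ q) (a b c : ℝ) :
    ‖(|a| ^ q * a - |b| ^ q * b) * c‖ₑ ≤
      ENNReal.ofReal (q + 1) * (‖a - b‖ₑ * ‖|a| + |b|‖ₑ ^ q * ‖c‖ₑ) := by
  have hab : 0 ≤ |a| + |b| := by positivity
  simp only [Real.enorm_eq_ofReal_abs, abs_of_nonneg hab, ENNReal.ofReal_rpow_of_nonneg hab hq]
  rw [← ENNReal.ofReal_mul (by positivity), ← ENNReal.ofReal_mul (by positivity),
    ← ENNReal.ofReal_mul (by linarith), abs_mul]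
  refine ENNReal.ofReal_le_ofReal ?_
  calc _ ≤ (q + 1) * (|a| + |b|) ^ q * |a - b| * |c| :=
        mul_le_mul_of_nonneg_right (abs_rpow_mul_self_sub_le hq a b) (abs_nonneg c)
    _ = _ := by ring

end SignedPower

section Lp

variable {Ω : Type*} [MeasurableSpace Ω] {μ : Measure Ω} {p : ℝ}

theorem lpNorm_eq_toReal_eLpNorm (hp : 0 < p) {f : Ω → ℝ} (hf : AEStronglyMeasurable f μ) :
    lpNorm μ p f = (eLpNorm f (.ofReal p) μ).toReal := by
  rw [toReal_eLpNorm hf, MeasureTheory.lpNorm_eq_integral_norm_rpow_toReal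
    (by simpa using hp) ENNReal.ofReal_ne_top hf, ENNReal.toReal_ofReal hp.le, _root_.lpNorm,
    one_div]
  simp only [Real.norm_eq_abs]

theorem memLp_ofReal_of_integrable_abs_rpow (hp : 0 < p) {f : Ω → ℝ}
    (hf : AEStronglyMeasurable f μ) (hfp : Integrable (fun x => |f x| ^ p) μ) :
    MemLp f (.ofReal p) μ :=
  (integrable_norm_rpow_iff hf (by simpa using hp) ENNReal.ofReal_ne_top).1
    (by simpa [ENNReal.toReal_ofReal hp.le] using hfp)

-- Hölder with exponents `p, p / (p - 2), p`, taken in the weighted form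
-- `ENNReal.lintegral_prod_norm_pow_le` so that the case `p = 2` (middle exponent `∞`) is included.
theorem lintegral_enorm_mul_rpow_mul_le {E F G : Type*} [NormedAddCommGroup E]
    [NormedAddCommGroup F] [NormedAddCommGroup G] (hp : 2 ≤ p) {f : Ω → E} {g : Ω → F}
    {h : Ω → G} (hf : AEStronglyMeasurable f μ) (hg : AEStronglyMeasurable g μ)
    (hh : AEStronglyMeasurable h μ) :
    ∫⁻ x, ‖f x‖ₑ * ‖g x‖ₑ ^ (p - 2) * ‖h x‖ₑ ∂μ ≤
      eLpNorm f (.ofReal p) μ * eLpNorm g (.ofReal p) μ ^ (p - 2) * eLpNorm h (.ofReal p) μ := by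
  have hp0 : 0 < p := by linarith
  have hroot : ∀ z : ℝ≥0∞, ∀ r : ℝ, (z ^ p) ^ (r / p) = z ^ r := fun z r => by
    rw [← ENNReal.rpow_mul, mul_div_cancel₀ r hp0.ne']
  have holder := ENNReal.lintegral_prod_norm_pow_le (μ := μ) Finset.univ
    (f := ![fun x => ‖f x‖ₑ ^ p, fun x => ‖g x‖ₑ ^ p, fun x => ‖h x‖ₑ ^ p])
    (p := ![1 / p, (p - 2) / p, 1 / p])
    (by intro i _; fin_cases i <;> exact (AEMeasurable.pow_const (by fun_prop) _))
    (by
      simp only [Fin.sum_univ_three, Matrix.cons_val_zero, Matrix.cons_val_one,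
        Matrix.cons_val_two, Matrix.head_cons, Matrix.tail_cons]
      field_simp
      ring)
    (by intro i _; fin_cases i <;> simp <;> positivity)
  simp only [Fin.prod_univ_three, Matrix.cons_val_zero, Matrix.cons_val_one,
    Matrix.cons_val_two, Matrix.head_cons, Matrix.tail_cons, hroot, ENNReal.rpow_one] at holder
  simp only [eLpNorm_eq_lintegral_rpow_enorm_toReal (by simpa using hp0) ENNReal.ofReal_ne_top,
    ENNReal.toReal_ofReal hp0.le, ← ENNReal.rpow_mul]
  convert holder using 3
  rw [one_div_mul_eq_div]

theorem lintegral_enorm_abs_rpow_mul_self_sub_mul_le (hp : 2 ≤ p) {u v η : Ω → ℝ}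
    (hu : AEStronglyMeasurable u μ) (hv : AEStronglyMeasurable v μ)
    (hη : AEStronglyMeasurable η μ) :
    ∫⁻ x, ‖(|u x| ^ (p - 2) * u x - |v x| ^ (p - 2) * v x) * η x‖ₑ ∂μ ≤
      ENNReal.ofReal (p - 1) * (eLpNorm (fun x => u x - v x) (.ofReal p) μ *
        (eLpNorm u (.ofReal p) μ + eLpNorm v (.ofReal p) μ) ^ (p - 2) *
          eLpNorm η (.ofReal p) μ) := by
  have hpointwise x :=
    enorm_abs_rpow_mul_self_sub_mul_le (q := p - 2) (by linarith) (u x) (v x) (η x)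
  rw [show p - 2 + 1 = p - 1 by ring] at hpointwise
  have hminkowski : eLpNorm (fun x => |u x| + |v x|) (.ofReal p) μ ≤
      eLpNorm u (.ofReal p) μ + eLpNorm v (.ofReal p) μ := by
    have := eLpNorm_add_le hu.norm hv.norm (ENNReal.one_le_ofReal.2 (by linarith)) (μ := μ)
    rwa [eLpNorm_norm, eLpNorm_norm] at this
  calc _ ≤ ∫⁻ x, ENNReal.ofReal (p - 1) *
        (‖u x - v x‖ₑ * ‖|u x| + |v x|‖ₑ ^ (p - 2) * ‖η x‖ₑ) ∂μ := lintegral_mono hpointwise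
    _ = ENNReal.ofReal (p - 1) *
        ∫⁻ x, ‖u x - v x‖ₑ * ‖|u x| + |v x|‖ₑ ^ (p - 2) * ‖η x‖ₑ ∂μ :=
      lintegral_const_mul' _ _ ENNReal.ofReal_ne_top
    _ ≤ ENNReal.ofReal (p - 1) * (eLpNorm (fun x => u x - v x) (.ofReal p) μ *
        eLpNorm (fun x => |u x| + |v x|) (.ofReal p) μ ^ (p - 2) * eLpNorm η (.ofReal p) μ) := by
      gcongr
      exact lintegral_enorm_mul_rpow_mul_le hp (hu.sub hv) (hu.norm.add hv.norm) hη
    _ ≤ _ := by gcongr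

end Lp

/-- For `p ≥ 2` and `u, v, η ∈ L^p(μ)`, the function
`(|u|^{p-2}u − |v|^{p-2}v)η` is integrable and
`|∫ (|u|^{p-2}u − |v|^{p-2}v) η dμ| ≤ (p−1) ‖u−v‖_{L^p} (‖u‖_{L^p}+‖v‖_{L^p})^{p-2} ‖η‖_{L^p}`. -/
theorem signedPower_pairing_estimate {Ω : Type*} [MeasurableSpace Ω] (μ : Measure Ω)
    (p : ℝ) (hp : 2 ≤ p) (u v η : Ω → ℝ)
    (hum : Measurable u) (hvm : Measurable v) (hηm : Measurable η)
    (hu : Integrable (fun x => |u x| ^ p) μ)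
    (hv : Integrable (fun x => |v x| ^ p) μ)
    (hη : Integrable (fun x => |η x| ^ p) μ) :
    Integrable (fun x => (|u x| ^ (p - 2) * u x - |v x| ^ (p - 2) * v x) * η x) μ ∧
      |∫ x, (|u x| ^ (p - 2) * u x - |v x| ^ (p - 2) * v x) * η x ∂μ| ≤
        (p - 1) * lpNorm μ p (fun x => u x - v x) *
          (lpNorm μ p u + lpNorm μ p v) ^ (p - 2) * lpNorm μ p η := by
  have hp0 : 0 < p := by linarith
  have hu' := memLp_ofReal_of_integrable_abs_rpow hp0 hum.aestronglyMeasurable hu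
  have hv' := memLp_ofReal_of_integrable_abs_rpow hp0 hvm.aestronglyMeasurable hv
  have hη' := memLp_ofReal_of_integrable_abs_rpow hp0 hηm.aestronglyMeasurable hη
  have hbound := lintegral_enorm_abs_rpow_mul_self_sub_mul_le hp hu'.1 hv'.1 hη'.1
  have hdiff_fin := (hu'.sub hv').eLpNorm_ne_top
  have hu_fin := hu'.eLpNorm_ne_top
  have hv_fin := hv'.eLpNorm_ne_top
  have hη_fin := hη'.eLpNorm_ne_top
  refine ⟨⟨by fun_prop, hbound.trans_lt (by finiteness)⟩, ?_⟩
  calc _ ≤ (∫⁻ x, ‖(|u x| ^ (p - 2) * u x - |v x| ^ (p - 2) * v x) * η x‖ₑ ∂μ).toReal := by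
        simpa only [Real.enorm_eq_ofReal_abs, Real.norm_eq_abs] using
          norm_integral_le_lintegral_norm (G := ℝ) (μ := μ) _
    _ ≤ _ := ENNReal.toReal_mono (by finiteness) hbound
    _ = _ := by
      rw [lpNorm_eq_toReal_eLpNorm hp0 (f := fun x => u x - v x) (hu'.sub hv').1,
        lpNorm_eq_toReal_eLpNorm hp0 hu'.1, lpNorm_eq_toReal_eLpNorm hp0 hv'.1,
        lpNorm_eq_toReal_eLpNorm hp0 hη'.1]
      simp only [ENNReal.toReal_mul, ← ENNReal.toReal_rpow,
        ENNReal.toReal_ofReal (by linarith : 0 ≤ p - 1), ENNReal.toReal_add hu_fin hv_fin]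
      ring
end

section
/- Let p be a real number with p ≥ 2, d ≥ 1, and let u, v : ℝ^d → ℝ be twice continuously differentiable with compact support. Then ∫_{ℝ^d} ((Δu(x) − |u(x)|^{p-2}u(x)) − (Δv(x) − |v(x)|^{p-2}v(x)))(u(x) − v(x)) dx ≤ −∫_{ℝ^d} |∇(u − v)(x)|^2 dx − (1/2)∫_{ℝ^d} |u(x)|^{p-2}(u(x) − v(x))^2 dx − (1/2)∫_{ℝ^d} |v(x)|^{p-2}(u(x) − v(x))^2 dx; in particular, this quantity is ≤ 0, i.e., the operator u ↦ Δu − |u|^{p-2}u is monotone (with reversed sign) on such functions. -/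
open MeasureTheory

/-- The Laplacian `Δu(x) = ∑ i, ∂²u/∂x_i²(x)` as the sum of second partial derivatives. -/
noncomputable def lap {d : ℕ} (u : EuclideanSpace ℝ (Fin d) → ℝ)
    (x : EuclideanSpace ℝ (Fin d)) : ℝ :=
  ∑ i : Fin d, fderiv ℝ (fun y => fderiv ℝ u y (EuclideanSpace.single i (1 : ℝ))) x
    (EuclideanSpace.single i (1 : ℝ))

/-!
Write `w = u - v`. Integration by parts turns `∫ Δw · w` into `-∫ ‖∇w‖²`, and the nonlinear
part is handled pointwise: with `A = |a|^(p-2)` and `B = |b|^(p-2)`,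
`(A a - B b)(a - b) = ½ (A + B)(a - b)² + ½ (A - B)(a² - b²)`,
where the last term is nonnegative because `t ↦ |t|^(p-2)` and `t ↦ t²` both increase with `|t|`.
-/

theorem monovary_abs_rpow_sq {q : ℝ} (hq : 0 ≤ q) :
    Monovary (fun t : ℝ => |t| ^ q) (fun t => t ^ 2) := fun _ _ h =>
  Real.rpow_le_rpow (abs_nonneg _) (sq_lt_sq.1 h).le hq

theorem half_abs_rpow_mul_sub_sq_add_le {q : ℝ} (hq : 0 ≤ q) (a b : ℝ) :
    1 / 2 * |a| ^ q * (a - b) ^ 2 + 1 / 2 * |b| ^ q * (a - b) ^ 2 ≤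
      (|a| ^ q * a - |b| ^ q * b) * (a - b) := by
  have h := (monovary_abs_rpow_sq hq).sub_mul_sub_nonneg b a
  linear_combination 1 / 2 * h

section Integral

variable {X : Type*} [TopologicalSpace X] [MeasurableSpace X] [OpensMeasurableSpace X]
  {μ : Measure X} [IsFiniteMeasureOnCompacts μ]

theorem half_integral_abs_rpow_mul_sub_sq_add_le {q : ℝ} (hq : 0 ≤ q) {u v : X → ℝ}
    (hu : Continuous u) (hv : Continuous v) (huv : HasCompactSupport fun x => u x - v x) :
    1 / 2 * ∫ x, |u x| ^ q * (u x - v x) ^ 2 ∂μ + 1 / 2 * ∫ x, |v x| ^ q * (u x - v x) ^ 2 ∂μ ≤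
      ∫ x, (|u x| ^ q * u x - |v x| ^ q * v x) * (u x - v x) ∂μ := by
  have hpow : Continuous fun t : ℝ => |t| ^ q :=
    (Real.continuous_rpow_const hq).comp continuous_abs
  have hsq : HasCompactSupport fun x => (u x - v x) ^ 2 := huv.comp_left (zero_pow two_ne_zero)
  have hA : Integrable (fun x => 1 / 2 * (|u x| ^ q * (u x - v x) ^ 2)) μ :=
    (((hpow.comp hu).mul ((hu.sub hv).pow 2)).integrable_of_hasCompactSupport
      hsq.mul_left).const_mul _
  have hB : Integrable (fun x => 1 / 2 * (|v x| ^ q * (u x - v x) ^ 2)) μ :=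
    (((hpow.comp hv).mul ((hu.sub hv).pow 2)).integrable_of_hasCompactSupport
      hsq.mul_left).const_mul _
  have hG : Integrable (fun x => (|u x| ^ q * u x - |v x| ^ q * v x) * (u x - v x)) μ :=
    ((((hpow.comp hu).mul hu).sub ((hpow.comp hv).mul hv)).mul
      (hu.sub hv)).integrable_of_hasCompactSupport huv.mul_left
  rw [← integral_const_mul, ← integral_const_mul, ← integral_add hA hB]
  refine integral_mono (hA.add hB) hG fun x => ?_
  simpa only [mul_assoc] using half_abs_rpow_mul_sub_sq_add_le hq (u x) (v x)

end Integral

section SecondDerivative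

variable {E : Type*} [NormedAddCommGroup E] [NormedSpace ℝ E] {w : E → ℝ}

theorem contDiff_one_fderiv_apply (hw : ContDiff ℝ 2 w) (e : E) :
    ContDiff ℝ 1 fun y => fderiv ℝ w y e :=
  (hw.fderiv_right one_add_one_eq_two.le).clm_apply contDiff_const

theorem continuous_fderiv_fderiv_apply (hw : ContDiff ℝ 2 w) (e : E) :
    Continuous fun x => fderiv ℝ (fun y => fderiv ℝ w y e) x e :=
  ((contDiff_one_fderiv_apply hw e).continuous_fderiv one_ne_zero).clm_apply continuous_const

theorem integral_mul_fderiv_fderiv_apply_self [FiniteDimensional ℝ E] [MeasurableSpace E]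
    [BorelSpace E] {μ : Measure E} [μ.IsAddHaarMeasure] (hw : ContDiff ℝ 2 w)
    (hws : HasCompactSupport w) (e : E) :
    ∫ x, w x * fderiv ℝ (fun y => fderiv ℝ w y e) x e ∂μ = -∫ x, fderiv ℝ w x e ^ 2 ∂μ := by
  have hC1 := contDiff_one_fderiv_apply hw e
  simp only [sq]
  exact integral_mul_fderiv_eq_neg_fderiv_mul_of_integrable
    ((hC1.continuous.mul hC1.continuous).integrable_of_hasCompactSupport
      (hws.fderiv_apply ℝ e).mul_left)
    ((hw.continuous.mul (continuous_fderiv_fderiv_apply hw e)).integrable_of_hasCompactSupport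
      hws.mul_right)
    ((hw.continuous.mul hC1.continuous).integrable_of_hasCompactSupport hws.mul_right)
    (fun x _ => hw.differentiable two_ne_zero x) (fun x _ => hC1.differentiable one_ne_zero x)

end SecondDerivative

section Laplacian

open RealInnerProductSpace

variable {d : ℕ}

theorem continuous_lap {w : EuclideanSpace ℝ (Fin d) → ℝ} (hw : ContDiff ℝ 2 w) :
    Continuous (lap w) :=
  continuous_finsetSum _ fun _ _ => continuous_fderiv_fderiv_apply hw _

theorem lap_sub {u v : EuclideanSpace ℝ (Fin d) → ℝ} (hu : ContDiff ℝ 2 u) (hv : ContDiff ℝ 2 v)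
    (x : EuclideanSpace ℝ (Fin d)) : lap (fun y => u y - v y) x = lap u x - lap v x := by
  have hfd : (fderiv ℝ fun y => u y - v y) = fun y => fderiv ℝ u y - fderiv ℝ v y :=
    funext fun y => fderiv_fun_sub (hu.differentiable two_ne_zero y)
      (hv.differentiable two_ne_zero y)
  simp only [lap, hfd, sub_apply, ← Finset.sum_sub_distrib]
  refine Finset.sum_congr rfl fun i _ => ?_
  rw [fderiv_fun_sub ((contDiff_one_fderiv_apply hu _).differentiable one_ne_zero x)
    ((contDiff_one_fderiv_apply hv _).differentiable one_ne_zero x)]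
  rfl

theorem norm_gradient_sq_eq_sum (w : EuclideanSpace ℝ (Fin d) → ℝ)
    (x : EuclideanSpace ℝ (Fin d)) :
    ‖gradient w x‖ ^ 2 = ∑ i, fderiv ℝ w x (EuclideanSpace.single i 1) ^ 2 := by
  have hcoord (i : Fin d) : gradient w x i = fderiv ℝ w x (EuclideanSpace.single i 1) := by
    have h : ⟪gradient w x, EuclideanSpace.single i 1⟫ =
        fderiv ℝ w x (EuclideanSpace.single i 1) :=
      InnerProductSpace.toDual_symm_apply
    rw [EuclideanSpace.inner_single_right] at h
    simpa using h
  simp [EuclideanSpace.norm_sq_eq, hcoord]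

theorem integral_lap_mul_self {w : EuclideanSpace ℝ (Fin d) → ℝ} (hw : ContDiff ℝ 2 w)
    (hws : HasCompactSupport w) : ∫ x, lap w x * w x = -∫ x, ‖gradient w x‖ ^ 2 := by
  have hC1 (i : Fin d) := contDiff_one_fderiv_apply hw (EuclideanSpace.single i 1)
  have hlap (i : Fin d) : Integrable fun x =>
      fderiv ℝ (fun y => fderiv ℝ w y (EuclideanSpace.single i 1)) x (EuclideanSpace.single i 1) *
        w x :=
    ((continuous_fderiv_fderiv_apply hw _).mul hw.continuous).integrable_of_hasCompactSupport
      hws.mul_left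
  have hgrad (i : Fin d) : Integrable fun x => fderiv ℝ w x (EuclideanSpace.single i 1) ^ 2 := by
    have hsupp : HasCompactSupport fun x => fderiv ℝ w x (EuclideanSpace.single i 1) ^ 2 :=
      (hws.fderiv_apply ℝ _).comp_left (g := fun t : ℝ => t ^ 2) (zero_pow two_ne_zero)
    exact ((hC1 i).continuous.pow 2).integrable_of_hasCompactSupport hsupp
  simp_rw [norm_gradient_sq_eq_sum, lap, Finset.sum_mul]
  rw [integral_finsetSum _ fun i _ => hlap i, integral_finsetSum _ fun i _ => hgrad i,
    ← Finset.sum_neg_distrib]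
  refine Finset.sum_congr rfl fun i _ => ?_
  simp_rw [mul_comm _ (w _)]
  exact integral_mul_fderiv_fderiv_apply_self hw hws _

theorem integral_damped_lap_sub_mul_sub {φ : ℝ → ℝ} (hφ : Continuous φ)
    {u v : EuclideanSpace ℝ (Fin d) → ℝ} (hu : ContDiff ℝ 2 u) (hv : ContDiff ℝ 2 v)
    (huv : HasCompactSupport fun y => u y - v y) :
    ∫ x, ((lap u x - φ (u x)) - (lap v x - φ (v x))) * (u x - v x) =
      -(∫ x, ‖gradient (fun y => u y - v y) x‖ ^ 2) - ∫ x, (φ (u x) - φ (v x)) * (u x - v x) := by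
  have hint {f : EuclideanSpace ℝ (Fin d) → ℝ} (hf : Continuous f) :
      Integrable fun x => f x * (u x - v x) :=
    (hf.mul (hu.continuous.sub hv.continuous)).integrable_of_hasCompactSupport huv.mul_left
  rw [← integral_lap_mul_self (hu.sub hv) huv, ← integral_sub (hint (continuous_lap (hu.sub hv)))
    (hint (f := fun x => φ (u x) - φ (v x)) (by fun_prop))]
  refine integral_congr_ae (Filter.Eventually.of_forall fun x => ?_)
  simp only [lap_sub hu hv]
  ring

end Laplacian

theorem monotonicity_of_damped_laplacian_general (p : ℝ) (hp : 2 ≤ p)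
    (d : ℕ) (u v : EuclideanSpace ℝ (Fin d) → ℝ)
    (hu : ContDiff ℝ 2 u) (husupp : HasCompactSupport u)
    (hv : ContDiff ℝ 2 v) (hvsupp : HasCompactSupport v) :
    (∫ x, ((lap u x - |u x| ^ (p - 2) * u x) - (lap v x - |v x| ^ (p - 2) * v x)) *
        (u x - v x) ≤
      -(∫ x, ‖gradient (fun y => u y - v y) x‖ ^ 2) -
        (1 / 2) * (∫ x, |u x| ^ (p - 2) * (u x - v x) ^ 2) -
        (1 / 2) * (∫ x, |v x| ^ (p - 2) * (u x - v x) ^ 2)) ∧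
    ∫ x, ((lap u x - |u x| ^ (p - 2) * u x) - (lap v x - |v x| ^ (p - 2) * v x)) *
        (u x - v x) ≤ 0 := by
  have hq : 0 ≤ p - 2 := sub_nonneg.2 hp
  have huv : HasCompactSupport fun y => u y - v y := husupp.sub hvsupp
  have hsignedPow : Continuous fun t : ℝ => |t| ^ (p - 2) * t :=
    ((Real.continuous_rpow_const hq).comp continuous_abs).mul continuous_id
  have hsplit := integral_damped_lap_sub_mul_sub hsignedPow hu hv huv
  have hnonlin := half_integral_abs_rpow_mul_sub_sq_add_le (μ := volume) hq hu.continuous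
    hv.continuous huv
  have hgrad : 0 ≤ ∫ x, ‖gradient (fun y => u y - v y) x‖ ^ 2 :=
    integral_nonneg fun _ => by positivity
  have hu0 : 0 ≤ ∫ x, |u x| ^ (p - 2) * (u x - v x) ^ 2 := integral_nonneg fun _ => by positivity
  have hv0 : 0 ≤ ∫ x, |v x| ^ (p - 2) * (u x - v x) ^ 2 := integral_nonneg fun _ => by positivity
  constructor <;> rw [hsplit] <;> linarith

/-- For `p ≥ 2`, `d ≥ 1` and `u, v : ℝ^d → ℝ` twice continuously
differentiable with compact support,
`∫ ((Δu − |u|^{p-2}u) − (Δv − |v|^{p-2}v))(u − v) dx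
  ≤ −∫ |∇(u − v)|² − (1/2)∫ |u|^{p-2}(u − v)² − (1/2)∫ |v|^{p-2}(u − v)²`;
in particular this quantity is `≤ 0` (monotonicity, with reversed sign). -/
theorem monotonicity_of_damped_laplacian (p : ℝ) (hp : 2 ≤ p)
    (d : ℕ) (hd : 1 ≤ d) (u v : EuclideanSpace ℝ (Fin d) → ℝ)
    (hu : ContDiff ℝ 2 u) (husupp : HasCompactSupport u)
    (hv : ContDiff ℝ 2 v) (hvsupp : HasCompactSupport v) :
    (∫ x, ((lap u x - |u x| ^ (p - 2) * u x) - (lap v x - |v x| ^ (p - 2) * v x)) *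
        (u x - v x) ≤
      -(∫ x, ‖gradient (fun y => u y - v y) x‖ ^ 2) -
        (1 / 2) * (∫ x, |u x| ^ (p - 2) * (u x - v x) ^ 2) -
        (1 / 2) * (∫ x, |v x| ^ (p - 2) * (u x - v x) ^ 2)) ∧
    ∫ x, ((lap u x - |u x| ^ (p - 2) * u x) - (lap v x - |v x| ^ (p - 2) * v x)) *
        (u x - v x) ≤ 0 :=
  monotonicity_of_damped_laplacian_general p hp d u v hu husupp hv hvsupp
end
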